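/- Fix N ≥ 1, two distinct words ξ = (ξ_0,…,ξ_{N-1}) and η = (η_0,…,η_{N-1}) in {1,…,k}^N with ξ_0 = η_0 and ξ_{N-1} = η_{N-1}. Consider words of length ℓN viewed as concatenations of ℓ blocks of length N, and the substitution map F_ℓ that replaces every block equal to ξ by η. Suppose that for a fixed family of sets, no word in the domain family Σ_x^ℓ(s) can have, at any block position i, the property that replacing its i-th block between ξ and η keeps it in the family (this is guaranteed by the disjointness hypothesis: π_s(f_ω^n(f_{ξ_0}∘⋯∘f_{ξ_{N-1}}(M))) ∩ π_s(f_ω^n(f_{η_0}∘⋯∘f_{η_{N-1}}(M))) = ∅ for all n, ω, s). Then F_ℓ restricted to Σ_x^ℓ(s) is injective. -/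

import Mathlib

/-!
If `F_ℓ w = F_ℓ w'` with `w ≠ w'`, look at the first block where the two words differ. Since `F_ℓ`
only changes `ξ`-blocks into `η`-blocks, one word has `ξ` and the other `η` there, after a common
prefix `P`. The tails of both words map `M` into `M`, so `x` lies in the `π_s`-images of both
`P ∘ f_ξ (M)` and `P ∘ f_η (M)`; writing `P` as `iterMap f ω |P|` this contradicts the
disjointness hypothesis.
-/

open Set

/-- `wordMap f [a₀,…,a_{N-1}] = f a₀ ∘ ⋯ ∘ f a_{N-1}`. -/
def wordMap {α : Type*} {k : ℕ} (f : Fin k → α → α) : List (Fin k) → α → α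
  | [] => id
  | i :: t => f i ∘ wordMap f t

/-- `iterMap f ω n = f_{ω_{n-1}} ∘ ⋯ ∘ f_{ω_0}`. -/
def iterMap {α : Type*} {k : ℕ} (f : Fin k → α → α) (ω : ℕ → Fin k) : ℕ → α → α
  | 0 => id
  | n + 1 => f (ω n) ∘ iterMap f ω n

section Words

variable {α : Type*} {k : ℕ} (f : Fin k → α → α)

theorem wordMap_append (L₁ L₂ : List (Fin k)) :
    wordMap f (L₁ ++ L₂) = wordMap f L₁ ∘ wordMap f L₂ := by
  induction L₁ with
  | nil => rfl
  | cons a t ih => simp [wordMap, ih, Function.comp_assoc]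

theorem iterMap_eq_wordMap (ω : ℕ → Fin k) (n : ℕ) :
    iterMap f ω n = wordMap f ((List.range n).map ω).reverse := by
  induction n with
  | zero => rfl
  | succ n ih => simp [iterMap, wordMap, List.range_succ, ih]

theorem List.map_getD_range {β : Type*} (L : List β) (d : β) :
    (List.range L.length).map (L.getD · d) = L := by
  apply List.ext_getElem (by simp)
  intro i _ hi
  simp [hi]

theorem exists_iterMap_eq_wordMap (d : Fin k) (L : List (Fin k)) :
    ∃ ω : ℕ → Fin k, iterMap f ω L.length = wordMap f L :=
  ⟨(L.reverse.getD · d), by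
    rw [iterMap_eq_wordMap, ← L.length_reverse, List.map_getD_range, List.reverse_reverse]⟩

variable {f} {M : Set α}

theorem mapsTo_wordMap (hmaps : ∀ i, MapsTo (f i) M M) : ∀ L, MapsTo (wordMap f L) M M
  | [] => mapsTo_id M
  | a :: t => (hmaps a).comp (mapsTo_wordMap hmaps t)

end Words

section Blocks

variable {α : Type*} {k N : ℕ}

def blockMap (f : Fin k → α → α) {n : ℕ} (w : Fin n → Fin N → Fin k) : α → α :=
  (List.ofFn fun i => wordMap f (List.ofFn (w i))).foldr (· ∘ ·) id

theorem blockMap_succ (f : Fin k → α → α) {n : ℕ} (w : Fin (n + 1) → Fin N → Fin k) :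
    blockMap f w = wordMap f (List.ofFn (w 0)) ∘ blockMap f (Fin.tail w) := by
  rw [blockMap, List.ofFn_succ]
  rfl

theorem mapsTo_blockMap {f : Fin k → α → α} {M : Set α} (hmaps : ∀ i, MapsTo (f i) M M) :
    ∀ {n : ℕ} (w : Fin n → Fin N → Fin k), MapsTo (blockMap f w) M M
  | 0, _ => mapsTo_id M
  | _ + 1, w => by
    rw [blockMap_succ]
    exact (mapsTo_wordMap hmaps _).comp (mapsTo_blockMap hmaps _)

end Blocks

section Replace

variable {β : Type*} [DecidableEq β]

def replace (ξ η : β) (a : β) : β := if a = ξ then η else a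

theorem eq_and_eq_or_of_replace_eq_replace {ξ η a b : β} (hab : a ≠ b)
    (h : replace ξ η a = replace ξ η b) : a = ξ ∧ b = η ∨ a = η ∧ b = ξ := by
  unfold replace at h
  split_ifs at h <;> simp_all

end Replace

section Separation

variable {α β : Type*} {k N : ℕ} {f : Fin k → α → α} {M : Set α} {π : α → β}
  {ξ η : Fin N → Fin k}

theorem apply_wordMap_ne_of_disjoint
    (hdisj : ∀ (n : ℕ) (ω : ℕ → Fin k),
      (π '' (iterMap f ω n '' (wordMap f (List.ofFn ξ) '' M))) ∩
      (π '' (iterMap f ω n '' (wordMap f (List.ofFn η) '' M))) = ∅)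
    (hne : ξ ≠ η) (P : List (Fin k)) {y z : α} (hy : y ∈ M) (hz : z ∈ M) :
    π (wordMap f P (wordMap f (List.ofFn ξ) y)) ≠ π (wordMap f P (wordMap f (List.ofFn η) z)) := by
  obtain ⟨i, -⟩ := Function.ne_iff.1 hne
  obtain ⟨ω, hω⟩ := exists_iterMap_eq_wordMap f (ξ i) P
  intro heq
  have hempty := hdisj P.length ω
  simp only [image_image, hω] at hempty
  exact eq_empty_iff_forall_notMem.1 hempty _ ⟨⟨y, hy, rfl⟩, z, hz, heq.symm⟩

/-- The prefix `P` is the induction invariant: it collects the blocks on which `w` and `w'` agree. -/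
theorem eq_of_replace_comp_eq (hmaps : ∀ i, MapsTo (f i) M M)
    (hsep : ξ ≠ η → ∀ (P : List (Fin k)) (y z : α), y ∈ M → z ∈ M →
      π (wordMap f P (wordMap f (List.ofFn ξ) y)) ≠ π (wordMap f P (wordMap f (List.ofFn η) z)))
    {n : ℕ} (P : List (Fin k)) (w w' : Fin n → Fin N → Fin k) {z z' : α} (hz : z ∈ M)
    (hz' : z' ∈ M) (hval : π (wordMap f P (blockMap f w z)) = π (wordMap f P (blockMap f w' z')))
    (hrep : replace ξ η ∘ w = replace ξ η ∘ w') : w = w' := by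
  induction n generalizing P with
  | zero => exact funext fun i => i.elim0
  | succ n ih =>
    simp only [blockMap_succ] at hval
    have hy := mapsTo_blockMap hmaps (Fin.tail w) hz
    have hy' := mapsTo_blockMap hmaps (Fin.tail w') hz'
    by_cases h₀ : w 0 = w' 0
    · have htail : Fin.tail w = Fin.tail w' := by
        refine ih (P ++ List.ofFn (w 0)) _ _ (by simpa [wordMap_append, ← h₀] using hval) ?_
        exact funext fun i => congrFun hrep i.succ
      rw [← Fin.cons_self_tail w, ← Fin.cons_self_tail w', h₀, htail]
    · rcases eq_and_eq_or_of_replace_eq_replace h₀ (congrFun hrep 0) with ⟨hξ, hη⟩ | ⟨hη, hξ⟩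
      · rw [hξ, hη] at hval h₀
        exact (hsep h₀ P _ _ hy hy' hval).elim
      · rw [hξ, hη] at hval h₀
        exact (hsep (Ne.symm h₀) P _ _ hy' hy hval.symm).elim

end Separation

theorem stmt4_general {Y : Type*} {m k N ℓ : ℕ}
    (M : Set (Fin m → Y)) (f : Fin k → (Fin m → Y) → (Fin m → Y))
    (hmaps : ∀ i, Set.MapsTo (f i) M M)
    (ξ η : Fin N → Fin k)
    (hdisj : ∀ (s : Fin m) (n : ℕ) (ω : ℕ → Fin k),
      ((fun y => y s) '' (iterMap f ω n '' (wordMap f (List.ofFn ξ) '' M))) ∩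
      ((fun y => y s) '' (iterMap f ω n '' (wordMap f (List.ofFn η) '' M))) = ∅)
    (s : Fin m) (x : Y) :
    Set.InjOn (fun w : Fin ℓ → Fin N → Fin k => fun i => if w i = ξ then η else w i)
      {w : Fin ℓ → Fin N → Fin k |
        x ∈ (fun y => y s) ''
          ((List.ofFn fun i => wordMap f (List.ofFn (w i))).foldr (· ∘ ·) id '' M)} := by
  rintro w ⟨_, ⟨z, hz, rfl⟩, hx⟩ w' ⟨_, ⟨z', hz', rfl⟩, hx'⟩ hrep
  exact eq_of_replace_comp_eq (π := fun y => y s) hmaps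
    (fun hne P _ _ hy hz => apply_wordMap_ne_of_disjoint (hdisj s) hne P hy hz)
    [] w w' hz hz' (hx.trans hx'.symm) hrep

/-- Injectivity of the substitution map `F_ℓ` (replacing every block equal to `ξ`
by `η`) on the family `Σ_x^ℓ(s)`, under the splitting-type disjointness. -/
theorem stmt4 {Y : Type*} {m k N ℓ : ℕ} (hN : 0 < N)
    (M : Set (Fin m → Y)) (f : Fin k → (Fin m → Y) → (Fin m → Y))
    (hmaps : ∀ i, Set.MapsTo (f i) M M)
    (ξ η : Fin N → Fin k) (hne : ξ ≠ η)
    (h0 : ξ ⟨0, hN⟩ = η ⟨0, hN⟩)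
    (hlast : ξ ⟨N - 1, Nat.sub_lt hN Nat.one_pos⟩ = η ⟨N - 1, Nat.sub_lt hN Nat.one_pos⟩)
    (hdisj : ∀ (s : Fin m) (n : ℕ) (ω : ℕ → Fin k),
      ((fun y => y s) '' (iterMap f ω n '' (wordMap f (List.ofFn ξ) '' M))) ∩
      ((fun y => y s) '' (iterMap f ω n '' (wordMap f (List.ofFn η) '' M))) = ∅)
    (s : Fin m) (x : Y) :
    Set.InjOn (fun w : Fin ℓ → Fin N → Fin k => fun i => if w i = ξ then η else w i)
      {w : Fin ℓ → Fin N → Fin k |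
        x ∈ (fun y => y s) ''
          ((List.ofFn fun i => wordMap f (List.ofFn (w i))).foldr (· ∘ ·) id '' M)} :=
  stmt4_general M f hmaps ξ η hdisj s x
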